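/- A face with boundary word (a a X Y) is equivalent to a face with boundary word (d d Y X) for a fresh edge d: a crosscap can be moved so as to exchange X and Y. -/
import Mathlib


/-- An oriented edge: an edge name together with an orientation. -/
abbrev OEdge := ℕ × Bool

/-- A boundary word of a face (read cyclically). -/
abbrev CWord := List OEdge

/-- A cell complex, presented by a choice of boundary word for each face. -/
abbrev PreCell := Multiset CWord

/-- The inverse of an oriented edge. -/
def oinv (x : OEdge) : OEdge := (x.1, !x.2)

/-- The inverse of a boundary word. -/
def winv (w : CWord) : CWord := (w.map oinv).reverse

/-- The edge `e` occurs (in some orientation) in the word `w`. -/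
def occursW (e : ℕ) (w : CWord) : Prop := ∃ b, (e, b) ∈ w

/-- The edge `e` occurs in the complex `C`. -/
def occursC (e : ℕ) (C : PreCell) : Prop := ∃ w ∈ C, occursW e w

/-- The total number of occurrences of the edge `e` (in either orientation) among the
boundary words of `C`. -/
def occCount (e : ℕ) (C : PreCell) : ℕ :=
  (C.map fun w => w.countP fun p => p.1 == e).sum

/-- `(F, E, B)` is a cell complex: every (oriented) edge appears at most twice in total
among the chosen boundary words. -/
def IsCellComplex (C : PreCell) : Prop := ∀ e : ℕ, occCount e C ≤ 2

/-- Substitution used in an elementary subdivision: replace the edge `a` by the two-letter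
word `bc` (and `a⁻¹` by `c⁻¹b⁻¹`). -/
def substEdge (a b c : ℕ) (p : OEdge) : CWord :=
  if p.1 = a then (if p.2 then [(b, true), (c, true)] else [(c, false), (b, false)])
  else [p]

/-- The elementary moves on cell complexes: cyclic rotation of a boundary word, replacing a
face by its inverse, splitting a face `(XY)` into `(Xa) + (a⁻¹Y)` along a fresh edge `a`,
and subdividing an edge `a` into a word `bc` of fresh edges. -/
inductive ElemMove : PreCell → PreCell → Prop
  | rot (w₁ w₂ : CWord) (C : PreCell) :
      ElemMove ((w₁ ++ w₂) ::ₘ C) ((w₂ ++ w₁) ::ₘ C)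
  | invert (w : CWord) (C : PreCell) :
      ElemMove (w ::ₘ C) (winv w ::ₘ C)
  | split (Xw Yw : CWord) (a : ℕ) (C : PreCell)
      (haX : ¬ occursW a Xw) (haY : ¬ occursW a Yw) (haC : ¬ occursC a C) :
      ElemMove ((Xw ++ Yw) ::ₘ C)
        ((Xw ++ [(a, true)]) ::ₘ ((a, false) :: Yw) ::ₘ C)
  | subdivide (a b c : ℕ) (C : PreCell)
      (hb : ¬ occursC b C) (hc : ¬ occursC c C) (hbc : b ≠ c) :
      ElemMove C (C.map fun w => w.flatMap (substEdge a b c))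

/-- Equivalence of cell complexes: the least equivalence relation generated by the
elementary moves (elementary subdivisions and their inverses). -/
def CellEquiv : PreCell → PreCell → Prop := Relation.EqvGen ElemMove

-- helper lemmas
lemma occursW_append {e : ℕ} {u v : CWord} :
    occursW e (u ++ v) ↔ occursW e u ∨ occursW e v := by
  simp [occursW, List.mem_append, exists_or]

lemma occursW_cons {e : ℕ} {p : OEdge} {w : CWord} :
    occursW e (p :: w) ↔ p.1 = e ∨ occursW e w := by
  constructor
  · rintro ⟨b, hb⟩
    rcases List.mem_cons.1 hb with h | h
    · left; rw [← h]
    · right; exact ⟨b, h⟩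
  · rintro (h | ⟨b, hb⟩)
    · exact ⟨p.2, by simp [← h]⟩
    · exact ⟨b, List.mem_cons_of_mem _ hb⟩

lemma occursW_winv {e : ℕ} {w : CWord} : occursW e (winv w) ↔ occursW e w := by
  constructor
  · rintro ⟨b, hb⟩
    simp only [winv, List.mem_reverse, List.mem_map] at hb
    obtain ⟨p, hp, he⟩ := hb
    refine ⟨p.2, ?_⟩
    have h1 : p.1 = e := congrArg Prod.fst he
    have : p = (e, p.2) := by rw [← h1]
    rwa [← this]
  · rintro ⟨b, hb⟩
    refine ⟨!b, ?_⟩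
    simp only [winv, List.mem_reverse, List.mem_map]
    exact ⟨(e, b), hb, rfl⟩

lemma winv_winv (w : CWord) : winv (winv w) = w := by
  simp only [winv, List.map_reverse, List.reverse_reverse, List.map_map]
  have : oinv ∘ oinv = id := by funext p; simp [oinv]
  simp [this]

lemma winv_append (u v : CWord) : winv (u ++ v) = winv v ++ winv u := by
  simp [winv]

lemma winv_cons (p : OEdge) (w : CWord) : winv (p :: w) = winv w ++ [oinv p] := by
  simp [winv]


lemma exists_fresh (X Y : CWord) (C : PreCell) (a d : ℕ) :
    ∃ b : ℕ, ¬ occursW b X ∧ ¬ occursW b Y ∧ ¬ occursC b C ∧ b ≠ a ∧ b ≠ d := by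
  classical
  let S : Finset ℕ := (X.map Prod.fst).toFinset ∪ (Y.map Prod.fst).toFinset ∪
      (C.bind fun w => ((w.map Prod.fst : List ℕ) : Multiset ℕ)).toFinset ∪ {a, d}
  have hnot : S.sup id + 1 ∉ S := by
    intro h
    have h2 : id (S.sup id + 1) ≤ S.sup id := Finset.le_sup h
    simp only [id] at h2
    omega
  have hX : ¬ occursW (S.sup id + 1) X := by
    rintro ⟨o, ho⟩
    exact hnot (Finset.mem_union_left _ (Finset.mem_union_left _ (Finset.mem_union_left _
      (List.mem_toFinset.2 (List.mem_map.2 ⟨(S.sup id + 1, o), ho, rfl⟩)))))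
  have hY : ¬ occursW (S.sup id + 1) Y := by
    rintro ⟨o, ho⟩
    exact hnot (Finset.mem_union_left _ (Finset.mem_union_left _ (Finset.mem_union_right _
      (List.mem_toFinset.2 (List.mem_map.2 ⟨(S.sup id + 1, o), ho, rfl⟩)))))
  have hC : ¬ occursC (S.sup id + 1) C := by
    rintro ⟨w, hw, o, ho⟩
    refine hnot (Finset.mem_union_left _ (Finset.mem_union_right _
      (Multiset.mem_toFinset.2 (Multiset.mem_bind.2 ⟨w, hw, ?_⟩))))
    have : (S.sup id + 1) ∈ w.map Prod.fst := List.mem_map.2 ⟨(S.sup id + 1, o), ho, rfl⟩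
    exact_mod_cast this
  have ha : S.sup id + 1 ≠ a := by
    intro h
    exact hnot (Finset.mem_union_right _ (by simp [h]))
  have hd : S.sup id + 1 ≠ d := by
    intro h
    exact hnot (Finset.mem_union_right _ (by simp [h]))
  exact ⟨S.sup id + 1, hX, hY, hC, ha, hd⟩

lemma occursW_nil {e : ℕ} : ¬ occursW e ([] : CWord) := by simp [occursW]

open Relation in
lemma crosscap_aux_neg (X Y : CWord) (a b : ℕ) (C : PreCell)
    (haX : ¬ occursW a X) (haY : ¬ occursW a Y) (haC : ¬ occursC a C)
    (hbX : ¬ occursW b X) (hbY : ¬ occursW b Y) (hbC : ¬ occursC b C) (hab : a ≠ b) :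
    CellEquiv (([(a, true), (a, true)] ++ X ++ Y) ::ₘ C)
      ((((b, false) :: Y) ++ ((b, false) :: winv X)) ::ₘ C) := by
  have hb1 : ¬ occursW b ((a, true) :: X) := by
    rw [occursW_cons]; push_neg; exact ⟨hab, hbX⟩
  have hb2 : ¬ occursW b (Y ++ [(a, true)]) := by
    rw [occursW_append]; push_neg
    refine ⟨hbY, ?_⟩
    rw [occursW_cons]; push_neg; exact ⟨hab, occursW_nil⟩
  have ha1 : ¬ occursW a ((b, false) :: Y) := by
    rw [occursW_cons]; push_neg; exact ⟨hab.symm, haY⟩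
  have ha2 : ¬ occursW a ((b, false) :: winv X) := by
    rw [occursW_cons]; push_neg
    exact ⟨hab.symm, fun h => haX (occursW_winv.1 h)⟩
  have e1 : ([(a, true), (a, true)] ++ X ++ Y : CWord)
      = [(a, true)] ++ ((a, true) :: (X ++ Y)) := by simp
  rw [e1]
  refine EqvGen.trans _ _ _
    (EqvGen.rel _ _ (ElemMove.rot [(a, true)] ((a, true) :: (X ++ Y)) C)) ?_
  have e2 : (((a, true) :: (X ++ Y)) ++ [(a, true)] : CWord)
      = ((a, true) :: X) ++ (Y ++ [(a, true)]) := by simp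
  rw [e2]
  refine EqvGen.trans _ _ _
    (EqvGen.rel _ _ (ElemMove.split ((a, true) :: X) (Y ++ [(a, true)]) b C hb1 hb2 hbC)) ?_
  refine EqvGen.trans _ _ _
    (EqvGen.rel _ _ (ElemMove.invert (((a, true) :: X) ++ [(b, true)]) _)) ?_
  have e3 : winv (((a, true) :: X) ++ [(b, true)])
      = ((b, false) :: winv X) ++ [(a, false)] := by
    rw [winv_append, winv_cons]; simp [winv, oinv]
  rw [e3]
  refine EqvGen.trans _ _ _
    (EqvGen.rel _ _ (ElemMove.rot ((b, false) :: winv X) [(a, false)] _)) ?_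
  rw [Multiset.cons_swap]
  refine EqvGen.symm _ _ ?_
  have e4 : ((b, false) :: (Y ++ [(a, true)]) : CWord) = ((b, false) :: Y) ++ [(a, true)] := by
    simp
  have e5 : ([(a, false)] ++ ((b, false) :: winv X) : CWord)
      = (a, false) :: ((b, false) :: winv X) := by simp
  rw [e4, e5]
  exact EqvGen.rel _ _ (ElemMove.split ((b, false) :: Y) ((b, false) :: winv X) a C ha1 ha2 haC)

open Relation in
lemma crosscap_aux_pos (X Y : CWord) (a b : ℕ) (C : PreCell)
    (haX : ¬ occursW a X) (haY : ¬ occursW a Y) (haC : ¬ occursC a C)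
    (hbX : ¬ occursW b X) (hbY : ¬ occursW b Y) (hbC : ¬ occursC b C) (hab : a ≠ b) :
    CellEquiv (([(a, true), (a, true)] ++ X ++ Y) ::ₘ C)
      ((((b, true) :: Y) ++ ((b, true) :: winv X)) ::ₘ C) := by
  have hb1 : ¬ occursW b ((a, true) :: X) := by
    rw [occursW_cons]; push_neg; exact ⟨hab, hbX⟩
  have hb2 : ¬ occursW b (Y ++ [(a, true)]) := by
    rw [occursW_append]; push_neg
    refine ⟨hbY, ?_⟩
    rw [occursW_cons]; push_neg; exact ⟨hab, occursW_nil⟩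
  have ha1 : ¬ occursW a ((b, true) :: Y) := by
    rw [occursW_cons]; push_neg; exact ⟨hab.symm, haY⟩
  have ha2 : ¬ occursW a ((b, true) :: winv X) := by
    rw [occursW_cons]; push_neg
    exact ⟨hab.symm, fun h => haX (occursW_winv.1 h)⟩
  have e1 : ([(a, true), (a, true)] ++ X ++ Y : CWord)
      = ([(a, true), (a, true)] ++ X) ++ Y := by simp
  rw [e1]
  refine EqvGen.trans _ _ _
    (EqvGen.rel _ _ (ElemMove.rot ([(a, true), (a, true)] ++ X) Y C)) ?_
  have e2 : (Y ++ ([(a, true), (a, true)] ++ X) : CWord)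
      = (Y ++ [(a, true)]) ++ ((a, true) :: X) := by simp
  rw [e2]
  refine EqvGen.trans _ _ _
    (EqvGen.rel _ _ (ElemMove.split (Y ++ [(a, true)]) ((a, true) :: X) b C hb2 hb1 hbC)) ?_
  rw [Multiset.cons_swap]
  refine EqvGen.trans _ _ _
    (EqvGen.rel _ _ (ElemMove.invert ((b, false) :: ((a, true) :: X)) _)) ?_
  have e3 : winv ((b, false) :: ((a, true) :: X))
      = winv X ++ [(a, false), (b, true)] := by
    rw [winv_cons, winv_cons]; simp [oinv]
  rw [e3]
  refine EqvGen.trans _ _ _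
    (EqvGen.rel _ _ (ElemMove.rot (winv X) [(a, false), (b, true)] _)) ?_
  rw [Multiset.cons_swap]
  refine EqvGen.trans _ _ _
    (EqvGen.rel _ _ (ElemMove.rot (Y ++ [(a, true)]) [(b, true)] _)) ?_
  refine EqvGen.symm _ _ ?_
  have e4 : ([(b, true)] ++ (Y ++ [(a, true)]) : CWord) = ((b, true) :: Y) ++ [(a, true)] := by
    simp
  have e5 : ([(a, false), (b, true)] ++ winv X : CWord)
      = (a, false) :: ((b, true) :: winv X) := by simp
  rw [e4, e5]
  exact EqvGen.rel _ _ (ElemMove.split ((b, true) :: Y) ((b, true) :: winv X) a C ha1 ha2 haC)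

open Relation in
lemma move_crosscap_swap_aux (Xw Yw : CWord) (a d : ℕ) (C : PreCell)
    (haX : ¬ occursW a Xw) (haY : ¬ occursW a Yw) (haC : ¬ occursC a C)
    (hdX : ¬ occursW d Xw) (hdY : ¬ occursW d Yw) (hdC : ¬ occursC d C) :
    CellEquiv (([(a, true), (a, true)] ++ Xw ++ Yw) ::ₘ C)
      (([(d, true), (d, true)] ++ Yw ++ Xw) ::ₘ C) := by
  obtain ⟨b, hbX, hbY, hbC, hba, hbd⟩ := exists_fresh Xw Yw C a d
  have h1 := crosscap_aux_neg Xw Yw a b C haX haY haC hbX hbY hbC hba.symm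
  have h2 := crosscap_aux_pos Yw Xw d b C hdY hdX hdC hbY hbX hbC hbd.symm
  -- h2 : ([(d,T),(d,T)] ++ Yw ++ Xw) ::ₘ C ≡ (((b,T)::Xw) ++ ((b,T)::winv Yw)) ::ₘ C
  have h3 : CellEquiv ((((b, true) :: Xw) ++ ((b, true) :: winv Yw)) ::ₘ C)
      (winv (((b, true) :: Xw) ++ ((b, true) :: winv Yw)) ::ₘ C) :=
    EqvGen.rel _ _ (ElemMove.invert _ _)
  have e3 : winv (((b, true) :: Xw) ++ ((b, true) :: winv Yw))
      = (Yw ++ ((b, false) :: winv Xw)) ++ [(b, false)] := by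
    rw [winv_append, winv_cons, winv_cons, winv_winv]
    simp [oinv]
  rw [e3] at h3
  have h4 : CellEquiv (((Yw ++ ((b, false) :: winv Xw)) ++ [(b, false)]) ::ₘ C)
      (([(b, false)] ++ (Yw ++ ((b, false) :: winv Xw))) ::ₘ C) :=
    EqvGen.rel _ _ (ElemMove.rot (Yw ++ ((b, false) :: winv Xw)) [(b, false)] C)
  have e4 : ([(b, false)] ++ (Yw ++ ((b, false) :: winv Xw)) : CWord)
      = ((b, false) :: Yw) ++ ((b, false) :: winv Xw) := by simp
  rw [e4] at h4
  exact EqvGen.trans _ _ _ h1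
    (EqvGen.symm _ _ (EqvGen.trans _ _ _ (EqvGen.trans _ _ _ h2 h3) h4))

/-- A face with boundary word `(a a X Y)` is equivalent to a face with
boundary word `(d d Y X)` for a fresh edge `d`: a crosscap can be moved so as to exchange
`X` and `Y`. -/
theorem move_crosscap_swap (Xw Yw : CWord) (a d : ℕ) (C : PreCell)
    (hval : IsCellComplex (([(a, true), (a, true)] ++ Xw ++ Yw) ::ₘ C))
    (haX : ¬ occursW a Xw) (haY : ¬ occursW a Yw) (haC : ¬ occursC a C)
    (hdX : ¬ occursW d Xw) (hdY : ¬ occursW d Yw) (hdC : ¬ occursC d C) :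
    CellEquiv (([(a, true), (a, true)] ++ Xw ++ Yw) ::ₘ C)
      (([(d, true), (d, true)] ++ Yw ++ Xw) ::ₘ C) := by
  exact move_crosscap_swap_aux Xw Yw a d C haX haY haC hdX hdY hdC
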